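/- Assume the x_{m,p} are nonnegative integers such that for every m there is some p with x_{m,p} ≥ 1, assume b_p, n_p > 0 for p ∈ {1,…,P}, and assume the family k ↦ ∏_{p=1}^P (1 + b_p·K_p(k))^(−n_p) is summable over k ∈ ℕ^M. Then each count K(x,r,+) and K(x,r,−) is finite, the family r ↦ (K(x,r,+) − K(x,r,−)) · ∏_{p=1}^P (1 + b_p·(Y_p + r_p))^(−n_p) is absolutely summable over r ∈ ℕ^P, and ∫_{(0,∞)^P} [∏_{m=1}^M e^(−y_m·(X_m·β)) / (1 + e^(−(X_m·β)))] · ∏_{p=1}^P G(β_p; b_p, n_p) dβ = Σ_{r ∈ ℕ^P} (K(x,r,+) − K(x,r,−)) · ∏_{p=1}^P (1 + b_p·(Y_p + r_p))^(−n_p). -/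

import Mathlib

open MeasureTheory

/-- The Gamma density with scale `b` and shape `n`:
`G(z; b, n) = (1/(b·Γ(n)))·(z/b)^(n−1)·e^(−z/b)` for `z > 0`, and `0` for `z ≤ 0`. -/
noncomputable def gammaDensity (b n z : ℝ) : ℝ :=
  if 0 < z then 1 / (b * Real.Gamma n) * (z / b) ^ (n - 1) * Real.exp (-(z / b)) else 0

/-- `K_p(k) = Σ_m (y_m + k_m)·x_{m,p}` (with integer-valued covariates `x`). -/
noncomputable def Kcoef {M P : ℕ} (x : Fin M → Fin P → ℕ) (y : Fin M → ℝ)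
    (k : Fin M → ℕ) (p : Fin P) : ℝ :=
  ∑ m, (y m + k m) * x m p

/-- The set of `k ∈ ℕ^M` with `Σ_m k_m·x_{m,p} = r_p` for all `p`, and `|k|` even. -/
def solPlus {M P : ℕ} (x : Fin M → Fin P → ℕ) (r : Fin P → ℕ) : Set (Fin M → ℕ) :=
  {k | (∀ p, ∑ m, k m * x m p = r p) ∧ Even (∑ m, k m)}

/-- The set of `k ∈ ℕ^M` with `Σ_m k_m·x_{m,p} = r_p` for all `p`, and `|k|` odd. -/
def solMinus {M P : ℕ} (x : Fin M → Fin P → ℕ) (r : Fin P → ℕ) : Set (Fin M → ℕ) :=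
  {k | (∀ p, ∑ m, k m * x m p = r p) ∧ Odd (∑ m, k m)}

/-- `K(x,r,+)`, the number of `k ∈ ℕ^M` with `Σ_m k_m·x_{m,p} = r_p` for all `p`
and `|k|` even. -/
noncomputable def Kplus {M P : ℕ} (x : Fin M → Fin P → ℕ) (r : Fin P → ℕ) : ℕ :=
  Nat.card (solPlus x r)

/-- `K(x,r,−)`, the number of `k ∈ ℕ^M` with `Σ_m k_m·x_{m,p} = r_p` for all `p`
and `|k|` odd. -/
noncomputable def Kminus {M P : ℕ} (x : Fin M → Fin P → ℕ) (r : Fin P → ℕ) : ℕ :=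
  Nat.card (solMinus x r)

/-!
For `β` in the open orthant, `t_m = X_m·β > 0`, so each logistic factor is an alternating
geometric series, `e^{-y t} / (1 + e^{-t}) = ∑_j (-1)^j e^{-(y + j) t}`. Multiplying the `M`
series gives a series over `k ∈ ℕ^M` whose `k`-th term is `(-1)^{|k|} ∏_p e^{-K_p(k) β_p}`, and
by the Laplace transform of the Gamma law this integrates against the Gamma densities to
`(-1)^{|k|} ∏_p (1 + b_p K_p(k))^{-n_p}`. The summability hypothesis says exactly that the series
converges absolutely in `L¹`, so sum and integral commute. Finally `K_p(k) = Y_p + r_p` depends on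
`k` only through `r = k ᵥ* x`, whose fibres are finite since no row of `x` vanishes; summing the
signs over a fibre gives `K(x,r,+) - K(x,r,-)`.
-/

open Finset Real Set

section GammaLaplace

variable {b n : ℝ}

lemma gammaDensity_nonneg (hb : 0 < b) (hn : 0 < n) (z : ℝ) : 0 ≤ gammaDensity b n z := by
  unfold gammaDensity
  split_ifs
  · have := Gamma_pos_of_pos hn
    positivity
  · exact le_rfl

lemma exp_mul_gammaDensity_of_pos (c : ℝ) (hb : 0 < b) {z : ℝ} (hz : 0 < z) :
    exp (-(c * z)) * gammaDensity b n z
      = (b ^ n * Gamma n)⁻¹ * (z ^ (n - 1) * exp (-((c + b⁻¹) * z))) := by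
  rw [gammaDensity, if_pos hz, div_rpow hz.le hb.le, rpow_sub_one hb.ne',
    show -((c + b⁻¹) * z) = -(c * z) + -(z / b) by field_simp; ring, exp_add]
  field_simp

lemma integral_exp_mul_gammaDensity_Ioi {c : ℝ} (hb : 0 < b) (hn : 0 < n) (hc : 0 < 1 + b * c) :
    ∫ z in Ioi 0, exp (-(c * z)) * gammaDensity b n z = (1 + b * c) ^ (-n) := by
  have hbr : b * (c + b⁻¹) = 1 + b * c := by field_simp; ring
  have hr : 0 < c + b⁻¹ := pos_of_mul_pos_right (hbr ▸ hc) hb.le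
  rw [setIntegral_congr_fun measurableSet_Ioi (fun z hz => exp_mul_gammaDensity_of_pos c hb hz),
    integral_const_mul, integral_rpow_mul_exp_neg_mul_Ioi hn hr, ← hbr,
    mul_rpow hb.le hr.le, rpow_neg hb.le, rpow_neg hr.le, one_div, inv_rpow hr.le]
  have := Gamma_pos_of_pos hn
  have : 0 < b ^ n := rpow_pos_of_pos hb n
  field_simp

-- The integral is nonzero, and a non-integrable function has integral `0`.
lemma integrableOn_Ioi_exp_mul_gammaDensity {c : ℝ} (hb : 0 < b) (hn : 0 < n)
    (hc : 0 < 1 + b * c) :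
    IntegrableOn (fun z => exp (-(c * z)) * gammaDensity b n z) (Ioi 0) :=
  Integrable.of_integral_ne_zero <| by
    rw [integral_exp_mul_gammaDensity_Ioi hb hn hc]
    positivity

end GammaLaplace

section ProductGammaLaplace

variable {ι : Type*} [Fintype ι] {b n c : ι → ℝ}

lemma integrableOn_pi_Ioi_prod_exp_mul_gammaDensity (hb : ∀ i, 0 < b i) (hn : ∀ i, 0 < n i)
    (hc : ∀ i, 0 < 1 + b i * c i) :
    IntegrableOn (fun β : ι → ℝ => ∏ i, exp (-(c i * β i)) * gammaDensity (b i) (n i) (β i))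
      (univ.pi fun _ => Ioi 0) := by
  rw [IntegrableOn, volume_pi, Measure.restrict_pi_pi]
  exact Integrable.fintype_prod (f := fun i z => exp (-(c i * z)) * gammaDensity (b i) (n i) z)
    fun i => integrableOn_Ioi_exp_mul_gammaDensity (hb i) (hn i) (hc i)

lemma integral_prod_exp_mul_gammaDensity_pi_Ioi (hb : ∀ i, 0 < b i) (hn : ∀ i, 0 < n i)
    (hc : ∀ i, 0 < 1 + b i * c i) :
    ∫ β in univ.pi (fun _ => Ioi 0), ∏ i, exp (-(c i * β i)) * gammaDensity (b i) (n i) (β i)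
      = ∏ i, (1 + b i * c i) ^ (-n i) := by
  rw [volume_pi, Measure.restrict_pi_pi,
    integral_fintype_prod_eq_prod (f := fun i z => exp (-(c i * z)) * gammaDensity (b i) (n i) z)]
  exact prod_congr rfl fun i _ => integral_exp_mul_gammaDensity_Ioi (hb i) (hn i) (hc i)

end ProductGammaLaplace

section ProductOfSeries

variable {R : Type*} [NormedCommRing R] {α : Type*}

lemma summable_norm_pi_prod {N : ℕ} {f : Fin N → α → R} (hf : ∀ i, Summable fun j => ‖f i j‖) :
    Summable fun k : Fin N → α => ‖∏ i, f i (k i)‖ := by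
  induction N with
  | zero => exact .of_finite
  | succ N ih =>
    rw [← (Fin.consEquiv fun _ => α).summable_iff]
    simpa [Function.comp_def, Fin.prod_univ_succ] using
      (hf 0).mul_norm (ih fun i => hf i.succ)

lemma hasSum_pi_prod [CompleteSpace R] {N : ℕ} {f : Fin N → α → R}
    (hf : ∀ i, Summable fun j => ‖f i j‖) :
    HasSum (fun k : Fin N → α => ∏ i, f i (k i)) (∏ i, ∑' j, f i j) := by
  induction N with
  | zero => simp
  | succ N ih =>
    rw [← (Fin.consEquiv fun _ => α).hasSum_iff, Fin.prod_univ_succ,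
      ← (ih fun i => hf i.succ).tsum_eq]
    have hprod := summable_mul_of_summable_norm (hf 0) (summable_norm_pi_prod fun i => hf i.succ)
    simpa [Function.comp_def, Fin.prod_univ_succ] using
      (hf 0).of_norm.hasSum.mul (ih fun i => hf i.succ).summable.hasSum hprod

end ProductOfSeries

lemma neg_one_pow_mul_exp_eq (a t : ℝ) (j : ℕ) :
    (-1) ^ j * exp (-((a + j) * t)) = exp (-(a * t)) * (-exp (-t)) ^ j := by
  rw [neg_pow (exp (-t)), ← exp_nat_mul, show -((a + j) * t) = -(a * t) + j * -t by ring, exp_add]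
  ring

lemma hasSum_neg_one_pow_mul_exp (a : ℝ) {t : ℝ} (ht : 0 < t) :
    HasSum (fun j : ℕ => (-1) ^ j * exp (-((a + j) * t))) (exp (-(a * t)) / (1 + exp (-t))) := by
  have hq : ‖-exp (-t)‖ < 1 := by simpa using ht
  simpa [neg_one_pow_mul_exp_eq, div_eq_mul_inv] using
    (hasSum_geometric_of_norm_lt_one hq).mul_left (exp (-(a * t)))

lemma summable_norm_neg_one_pow_mul_exp (a : ℝ) {t : ℝ} (ht : 0 < t) :
    Summable fun j : ℕ => ‖(-1) ^ j * exp (-((a + j) * t))‖ := by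
  have hq : ‖-exp (-t)‖ < 1 := by simpa using ht
  simpa [neg_one_pow_mul_exp_eq, norm_mul] using
    (summable_norm_geometric_of_norm_lt_one hq).mul_left ‖exp (-(a * t))‖

section Expansion

variable {M P : ℕ} (x : Fin M → Fin P → ℕ) (y : Fin M → ℝ)

lemma Kcoef_nonneg (hy : ∀ m, 0 ≤ y m) (k : Fin M → ℕ) (p : Fin P) : 0 ≤ Kcoef x y k p :=
  sum_nonneg fun m _ => mul_nonneg (add_nonneg (hy m) (Nat.cast_nonneg _)) (Nat.cast_nonneg _)

lemma prod_neg_one_pow_mul_exp_eq (k : Fin M → ℕ) (β : Fin P → ℝ) :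
    ∏ m, (-1) ^ k m * exp (-((y m + k m) * ∑ p, (x m p : ℝ) * β p))
      = (-1) ^ (∑ m, k m) * ∏ p, exp (-(Kcoef x y k p * β p)) := by
  rw [prod_mul_distrib, prod_pow_eq_pow_sum, ← exp_sum, ← exp_sum]
  congr 2
  simp only [Kcoef, mul_sum, sum_mul, ← sum_neg_distrib]
  rw [sum_comm]
  exact sum_congr rfl fun _ _ => sum_congr rfl fun _ _ => by ring

lemma hasSum_prod_logit (hx : ∀ m, ∃ p, 1 ≤ x m p) {β : Fin P → ℝ} (hβ : ∀ p, 0 < β p) :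
    HasSum (fun k : Fin M → ℕ => (-1) ^ (∑ m, k m) * ∏ p, exp (-(Kcoef x y k p * β p)))
      (∏ m, exp (-(y m * ∑ p, (x m p : ℝ) * β p)) / (1 + exp (-(∑ p, (x m p : ℝ) * β p)))) := by
  have ht : ∀ m, 0 < ∑ p, (x m p : ℝ) * β p := fun m => by
    obtain ⟨p, hp⟩ := hx m
    exact sum_pos' (fun q _ => mul_nonneg (Nat.cast_nonneg _) (hβ q).le)
      ⟨p, mem_univ p, mul_pos (by exact_mod_cast hp) (hβ p)⟩
  simpa only [prod_neg_one_pow_mul_exp_eq, (hasSum_neg_one_pow_mul_exp _ (ht _)).tsum_eq] using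
    hasSum_pi_prod fun m => summable_norm_neg_one_pow_mul_exp (y m) (ht m)

end Expansion

lemma integral_logit_gamma_eq_tsum {M P : ℕ} (x : Fin M → Fin P → ℕ) (hx : ∀ m, ∃ p, 1 ≤ x m p)
    (y : Fin M → ℝ) (hy : ∀ m, 0 ≤ y m) (b n : Fin P → ℝ) (hb : ∀ p, 0 < b p)
    (hn : ∀ p, 0 < n p)
    (hsum : Summable fun k : Fin M → ℕ => ∏ p, (1 + b p * Kcoef x y k p) ^ (-(n p))) :
    ∫ β in univ.pi (fun _ : Fin P => Ioi (0 : ℝ)),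
        (∏ m, exp (-(y m * ∑ p, (x m p : ℝ) * β p)) / (1 + exp (-(∑ p, (x m p : ℝ) * β p)))) *
          ∏ p, gammaDensity (b p) (n p) (β p)
      = ∑' k : Fin M → ℕ, (-1) ^ (∑ m, k m) * ∏ p, (1 + b p * Kcoef x y k p) ^ (-(n p)) := by
  set G : (Fin M → ℕ) → (Fin P → ℝ) → ℝ := fun k β =>
    ∏ p, exp (-(Kcoef x y k p * β p)) * gammaDensity (b p) (n p) (β p)
  have hc : ∀ k p, 0 < 1 + b p * Kcoef x y k p := fun k p => by
    have := mul_nonneg (hb p).le (Kcoef_nonneg x y hy k p)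
    linarith
  have hG : ∀ k, IntegrableOn (G k) (univ.pi fun _ => Ioi 0) := fun k =>
    integrableOn_pi_Ioi_prod_exp_mul_gammaDensity hb hn (hc k)
  have hnorm : ∀ k β, ‖(-1) ^ (∑ m, k m) * G k β‖ = G k β := fun k β => by
    rw [norm_mul, norm_pow, norm_neg, norm_one, one_pow, one_mul, Real.norm_of_nonneg]
    exact prod_nonneg fun p _ =>
      mul_nonneg (exp_nonneg _) (gammaDensity_nonneg (hb p) (hn p) _)
  have hexpand : ∀ β ∈ univ.pi (fun _ : Fin P => Ioi (0 : ℝ)),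
      (∏ m, exp (-(y m * ∑ p, (x m p : ℝ) * β p)) / (1 + exp (-(∑ p, (x m p : ℝ) * β p)))) *
        ∏ p, gammaDensity (b p) (n p) (β p) = ∑' k, (-1) ^ (∑ m, k m) * G k β := fun β hβ => by
    have := (hasSum_prod_logit x y hx fun p => hβ p trivial).mul_right
      (∏ p, gammaDensity (b p) (n p) (β p))
    simpa only [G, mul_assoc, prod_mul_distrib] using this.tsum_eq.symm
  rw [setIntegral_congr_fun (MeasurableSet.univ_pi fun _ => measurableSet_Ioi) hexpand,
    ← integral_tsum_of_summable_integral_norm (fun k => (hG k).const_mul _)]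
  · refine tsum_congr fun k => ?_
    rw [integral_const_mul, integral_prod_exp_mul_gammaDensity_pi_Ioi hb hn (hc k)]
  · simpa only [hnorm, G, integral_prod_exp_mul_gammaDensity_pi_Ioi hb hn (hc _)] using hsum

lemma Summable.summable_norm_tsum_fiberwise {α γ E : Type*} [NormedAddCommGroup E]
    [CompleteSpace E] {f : α → E} (hf : Summable fun a => ‖f a‖) (g : α → γ) :
    Summable fun c => ‖∑' a : g ⁻¹' {c}, f a‖ :=
  (hf.hasSum.tsum_fiberwise g).summable.of_nonneg_of_le (fun _ => norm_nonneg _)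
    fun _ => norm_tsum_le_tsum_norm (hf.subtype _)

open Matrix

section Regrouping

variable {M P : ℕ} (x : Fin M → Fin P → ℕ)

lemma preimage_vecMul_singleton_eq_union (r : Fin P → ℕ) :
    (· ᵥ* x) ⁻¹' {r} = solPlus x r ∪ solMinus x r := by
  ext k
  simp only [Set.mem_preimage, Set.mem_singleton_iff, Set.mem_union, solPlus, solMinus,
    Set.mem_ofPred_eq, ← and_or_left, Nat.even_or_odd, and_true, funext_iff]
  rfl

lemma disjoint_solPlus_solMinus (r : Fin P → ℕ) : Disjoint (solPlus x r) (solMinus x r) :=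
  Set.disjoint_left.2 fun _ hk hk' => Nat.not_odd_iff_even.2 hk.2 hk'.2

lemma finite_preimage_vecMul_singleton (hx : ∀ m, ∃ p, 1 ≤ x m p) (r : Fin P → ℕ) :
    ((· ᵥ* x) ⁻¹' {r}).Finite := by
  choose p hp using hx
  refine (Set.finite_Iic fun m => r (p m)).subset fun k hk m => ?_
  rw [Set.mem_preimage, Set.mem_singleton_iff] at hk
  show k m ≤ r (p m)
  calc k m ≤ k m * x m (p m) := Nat.le_mul_of_pos_right _ (hp m)
    _ ≤ ∑ m', k m' * x m' (p m) :=
      single_le_sum (f := fun m' => k m' * x m' (p m)) (fun _ _ => Nat.zero_le _) (mem_univ m)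
    _ = r (p m) := congrFun hk (p m)

lemma tsum_preimage_vecMul_neg_one_pow (hx : ∀ m, ∃ p, 1 ≤ x m p) (r : Fin P → ℕ) :
    ∑' k : (· ᵥ* x) ⁻¹' {r}, (-1 : ℝ) ^ (∑ m, (k : Fin M → ℕ) m)
      = (Kplus x r : ℝ) - Kminus x r := by
  have hfin := finite_preimage_vecMul_singleton x hx r
  rw [preimage_vecMul_singleton_eq_union] at hfin ⊢
  rw [Summable.tsum_union_disjoint (f := fun k : Fin M → ℕ => (-1 : ℝ) ^ (∑ m, k m))
      (disjoint_solPlus_solMinus x r)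
      ((hfin.subset subset_union_left).summable _) ((hfin.subset subset_union_right).summable _),
    tsum_congr fun k : solPlus x r => k.2.2.neg_one_pow,
    tsum_congr fun k : solMinus x r => k.2.2.neg_one_pow, tsum_const, tsum_const, Kplus, Kminus]
  simp [sub_eq_add_neg]

lemma tsum_preimage_vecMul_neg_one_pow_mul (hx : ∀ m, ∃ p, 1 ≤ x m p) (C : (Fin P → ℕ) → ℝ)
    (r : Fin P → ℕ) :
    ∑' k : (· ᵥ* x) ⁻¹' {r}, (-1 : ℝ) ^ (∑ m, (k : Fin M → ℕ) m) * C ((k : Fin M → ℕ) ᵥ* x)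
      = ((Kplus x r : ℝ) - Kminus x r) * C r := by
  rw [← tsum_preimage_vecMul_neg_one_pow x hx r, ← tsum_mul_right]
  exact tsum_congr fun k => by rw [show (k : Fin M → ℕ) ᵥ* x = r from k.2]

lemma Kcoef_eq_add_vecMul (y : Fin M → ℝ) (k : Fin M → ℕ) (p : Fin P) :
    Kcoef x y k p = ∑ m, y m * x m p + ((k ᵥ* x) p : ℕ) := by
  simp only [Kcoef, vecMul, dotProduct, add_mul, sum_add_distrib]
  push_cast
  rfl

end Regrouping

theorem integral_logit_gamma_eq_tsum_diophantine_general (M P : ℕ)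
    (x : Fin M → Fin P → ℕ) (hx : ∀ m, ∃ p, 1 ≤ x m p)
    (y : Fin M → ℝ) (hy : ∀ m, y m = 0 ∨ y m = 1)
    (b n : Fin P → ℝ) (hb : ∀ p, 0 < b p) (hn : ∀ p, 0 < n p)
    (hsum : Summable fun k : Fin M → ℕ => ∏ p, (1 + b p * Kcoef x y k p) ^ (-(n p))) :
    (∀ r : Fin P → ℕ, (solPlus x r).Finite ∧ (solMinus x r).Finite) ∧
    Summable (fun r : Fin P → ℕ =>
      |((Kplus x r : ℝ) - (Kminus x r : ℝ)) *
        ∏ p, (1 + b p * ((∑ m, y m * x m p) + r p)) ^ (-(n p))|) ∧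
    ∫ β in Set.univ.pi (fun _ : Fin P => Set.Ioi (0 : ℝ)),
        (∏ m, Real.exp (-(y m * ∑ p, (x m p : ℝ) * β p)) /
            (1 + Real.exp (-(∑ p, (x m p : ℝ) * β p)))) *
          ∏ p, gammaDensity (b p) (n p) (β p)
      = ∑' r : Fin P → ℕ,
          ((Kplus x r : ℝ) - (Kminus x r : ℝ)) *
            ∏ p, (1 + b p * ((∑ m, y m * x m p) + r p)) ^ (-(n p)) := by
  have hy0 : ∀ m, 0 ≤ y m := fun m => by rcases hy m with h | h <;> simp [h]
  set C : (Fin P → ℕ) → ℝ := fun r => ∏ p, (1 + b p * ((∑ m, y m * x m p) + r p)) ^ (-(n p))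
  have hKC : ∀ k, ∏ p, (1 + b p * Kcoef x y k p) ^ (-(n p)) = C (k ᵥ* x) := fun k => by
    simp only [C, Kcoef_eq_add_vecMul]
  have hF : Summable fun k : Fin M → ℕ => ‖(-1 : ℝ) ^ (∑ m, k m) * C (k ᵥ* x)‖ := by
    simpa [hKC] using hsum.abs
  refine ⟨fun r => ?_, ?_, ?_⟩
  · have hfin := finite_preimage_vecMul_singleton x hx r
    rw [preimage_vecMul_singleton_eq_union] at hfin
    exact ⟨hfin.subset subset_union_left, hfin.subset subset_union_right⟩
  · simpa only [tsum_preimage_vecMul_neg_one_pow_mul x hx, Real.norm_eq_abs] using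
      hF.summable_norm_tsum_fiberwise (· ᵥ* x)
  · rw [integral_logit_gamma_eq_tsum x hx y hy0 b n hb hn hsum]
    simp only [hKC]
    rw [← (hF.of_norm.hasSum.tsum_fiberwise (· ᵥ* x)).tsum_eq]
    exact tsum_congr (tsum_preimage_vecMul_neg_one_pow_mul x hx C)

/-- Regrouped closed-form series expansion of the marginalized logit likelihood against
a product of independent Gamma priors (Theorem 2 of the paper, for one household). -/
theorem integral_logit_gamma_eq_tsum_diophantine (M P : ℕ) (hM : 1 ≤ M) (hP : 1 ≤ P)
    (x : Fin M → Fin P → ℕ) (hx : ∀ m, ∃ p, 1 ≤ x m p)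
    (y : Fin M → ℝ) (hy : ∀ m, y m = 0 ∨ y m = 1)
    (b n : Fin P → ℝ) (hb : ∀ p, 0 < b p) (hn : ∀ p, 0 < n p)
    (hsum : Summable fun k : Fin M → ℕ => ∏ p, (1 + b p * Kcoef x y k p) ^ (-(n p))) :
    (∀ r : Fin P → ℕ, (solPlus x r).Finite ∧ (solMinus x r).Finite) ∧
    Summable (fun r : Fin P → ℕ =>
      |((Kplus x r : ℝ) - (Kminus x r : ℝ)) *
        ∏ p, (1 + b p * ((∑ m, y m * x m p) + r p)) ^ (-(n p))|) ∧
    ∫ β in Set.univ.pi (fun _ : Fin P => Set.Ioi (0 : ℝ)),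
        (∏ m, Real.exp (-(y m * ∑ p, (x m p : ℝ) * β p)) /
            (1 + Real.exp (-(∑ p, (x m p : ℝ) * β p)))) *
          ∏ p, gammaDensity (b p) (n p) (β p)
      = ∑' r : Fin P → ℕ,
          ((Kplus x r : ℝ) - (Kminus x r : ℝ)) *
            ∏ p, (1 + b p * ((∑ m, y m * x m p) + r p)) ^ (-(n p)) :=
  integral_logit_gamma_eq_tsum_diophantine_general M P x hx y hy b n hb hn hsum
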